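/- arXiv:2507.03439 — 3 statements merged into one kernel-verified Lean document; each statement's English description precedes it below -/
import Mathlib

section
/- Let Σ be a finite alphabet, c ∈ Σ, L₁ ⊆ (Σ ∖ {c})* (i.e., no word of L₁ contains c), and L₂ ⊆ Σ*. Then Σ* ∖ (L₁ · {c} · L₂) = ((Σ ∖ {c})* ∖ L₁) · {c} · Σ* ∪ (Σ ∖ {c})* ∪ (Σ ∖ {c})* · {c} · (Σ* ∖ L₂). -/
/-!
A word containing `c` splits uniquely at its first `c` as `u ++ c :: v` with `u` free of `c`.
Since every word of `L₁` is free of `c`, such a word lies in `L₁ · {c} · L₂` exactly when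
`u ∈ L₁` and `v ∈ L₂`; the first and third languages on the right collect the two ways this
can fail, and the middle one the words without `c`.
-/

/-- The language of words over `α` containing no occurrence of `c`,
i.e. `(Σ ∖ {c})*`. -/
def noLetter {α : Type*} (c : α) : Language α := {w | c ∉ w}

theorem List.append_cons_inj_of_notMem_left {α : Type*} {x₁ x₂ z₁ z₂ : List α} {a : α}
    (h₁ : a ∉ x₁) (h₂ : a ∉ x₂) :
    x₁ ++ a :: z₁ = x₂ ++ a :: z₂ ↔ x₁ = x₂ ∧ z₁ = z₂ := by
  refine ⟨fun h => ?_, fun ⟨hx, hz⟩ => hx ▸ hz ▸ rfl⟩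
  rcases List.append_eq_append_iff.1 h with ⟨y, rfl, hy⟩ | ⟨y, rfl, hy⟩ <;>
    cases y <;> simp_all

namespace Language

variable {α : Type*} {K M : Language α} {a : α} {u v w : List α}

theorem mem_mul_singleton_mul :
    w ∈ K * {[a]} * M ↔ ∃ u ∈ K, ∃ v ∈ M, u ++ a :: v = w := by
  constructor
  · rintro ⟨_, ⟨u, hu, _, rfl, rfl⟩, v, hv, rfl⟩
    exact ⟨u, hu, v, hv, by simp⟩
  · rintro ⟨u, hu, v, hv, rfl⟩
    exact ⟨u ++ [a], ⟨u, hu, [a], rfl, rfl⟩, v, hv, by simp⟩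

theorem mem_of_mem_mul_singleton_mul (hw : w ∈ K * {[a]} * M) : a ∈ w := by
  obtain ⟨u, -, v, -, rfl⟩ := mem_mul_singleton_mul.1 hw
  simp

theorem append_cons_mem_mul_singleton_mul_iff (hK : K ≤ noLetter a) (hu : a ∉ u) :
    u ++ a :: v ∈ K * {[a]} * M ↔ u ∈ K ∧ v ∈ M := by
  refine ⟨fun h => ?_, fun ⟨huK, hvM⟩ => mem_mul_singleton_mul.2 ⟨u, huK, v, hvM, rfl⟩⟩
  obtain ⟨u', hu'K, v', hv'M, huv⟩ := mem_mul_singleton_mul.1 h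
  obtain ⟨rfl, rfl⟩ := (List.append_cons_inj_of_notMem_left (hK hu'K) hu).1 huv
  exact ⟨hu'K, hv'M⟩

end Language

theorem gate_three_case_characterization_general {α : Type*} (c : α)
    (L₁ L₂ : Language α) (hL₁ : L₁ ≤ noLetter c) :
    (L₁ * {[c]} * L₂)ᶜ =
      (noLetter c \ L₁) * {[c]} * ⊤ ⊔ noLetter c ⊔ noLetter c * {[c]} * L₂ᶜ := by
  ext w
  change w ∉ (_ : Language α) ↔ (w ∈ (_ : Language α) ∨ c ∉ w) ∨ w ∈ (_ : Language α)
  by_cases hw : c ∈ w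
  · obtain ⟨u, v, rfl, hu⟩ := List.eq_append_cons_of_mem hw
    rw [Language.append_cons_mem_mul_singleton_mul_iff hL₁ hu,
      Language.append_cons_mem_mul_singleton_mul_iff sdiff_le hu,
      Language.append_cons_mem_mul_singleton_mul_iff le_rfl hu]
    change ¬(u ∈ L₁ ∧ v ∈ L₂) ↔ ((c ∉ u ∧ u ∉ L₁) ∧ True ∨ c ∉ u ++ c :: v) ∨ c ∉ u ∧ v ∉ L₂
    tauto
  · simpa [hw] using mt Language.mem_of_mem_mul_singleton_mul hw

/-- Three-case characterization of the complement of `L₁ · {c} · L₂` when no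
word of `L₁` contains `c` (Section 4.2 of the paper). -/
theorem gate_three_case_characterization {α : Type*} [Fintype α] (c : α)
    (L₁ L₂ : Language α) (hL₁ : L₁ ≤ noLetter c) :
    (L₁ * {[c]} * L₂)ᶜ =
      (noLetter c \ L₁) * {[c]} * ⊤ ⊔ noLetter c ⊔ noLetter c * {[c]} * L₂ᶜ :=
  gate_three_case_characterization_general c L₁ L₂ hL₁
end

section
/- For every n ∈ ℕ there exists an NFA over the three-letter alphabet {a, b, c} with at most 2n + 7 states whose language is the complement {a, b, c}* ∖ ({a, b}* · {a} · {a, b}ⁿ · {c} · {a, b}ⁿ · {a} · {a, b}*). -/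
/-- The language `{a, b}*` of words over the three-letter alphabet
`{a, b, c}` (modeled by `Fin 3` with `a = 0`, `b = 1`, `c = 2`) containing no
occurrence of `c`. -/
def abStar : Language (Fin 3) := {w | ∀ x ∈ w, x ≠ 2}

/-- The language `{a, b}ⁿ` of words of length `n` over `{a, b, c}` containing
no occurrence of `c`. -/
def abLen (n : ℕ) : Language (Fin 3) := {w | w.length = n ∧ ∀ x ∈ w, x ≠ 2}

/-!
A word lies outside the gate language iff it does not contain exactly one `c`, or it is `u c t`
with `u, t ∈ {a, b}*` and the `(n + 1)`-st letter of `u` from the right or of `t` from the left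
is not an `a`: it is a `b`, or it does not exist. So the complement is accepted by the disjoint
union of a 3-state automaton counting `c`s and a `(2n + 4)`-state automaton that either starts in
a countdown which must end on `c`, or scans the word and guesses a `b` followed `n + 1` letters
later by `c`, or a `c` followed `n + 1` letters later by `b` or by the end of the word.

Both automata are verified through their right languages: any family of languages with
`[] ∈ L q ↔ q ∈ accept` and `a :: x ∈ L q ↔ ∃ p ∈ step q a, x ∈ L p` is the family
of languages accepted from the states.
-/

/-- The instance is explicit: `x ∈ ({w | p w} : Language α)` elaborates to `Set` membership. -/
@[simp]
theorem Language.mem_setOf {α : Type*} {p : List α → Prop} {x : List α} :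
    @Membership.mem _ (Language α) _ {w | p w} x ↔ p x :=
  Iff.rfl

theorem Language.mem_mul_singleton_mul_s11 {α : Type*} {P Q : Language α} {c : α} {w : List α} :
    w ∈ P * {[c]} * Q ↔ ∃ u t, w = u ++ c :: t ∧ u ∈ P ∧ t ∈ Q := by
  simp only [Language.mem_mul]
  constructor
  · rintro ⟨_, ⟨u, hu, _, rfl, rfl⟩, t, ht, rfl⟩
    exact ⟨u, t, by simp, hu, ht⟩
  · rintro ⟨u, t, rfl, hu, ht⟩
    exact ⟨u ++ [c], ⟨u, hu, [c], rfl, rfl⟩, t, ht, by simp⟩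

namespace List

variable {α : Type*}

theorem getElem?_eq_some_iff_exists_append_cons {l : List α} {n : ℕ} {a : α} :
    l[n]? = some a ↔ ∃ y z, l = y ++ a :: z ∧ y.length = n := by
  constructor
  · intro h
    obtain ⟨hn, rfl⟩ := getElem?_eq_some_iff.1 h
    refine ⟨l.take n, l.drop (n + 1), ?_, by simp; omega⟩
    rw [← drop_eq_getElem_cons hn, take_append_drop]
  · rintro ⟨y, z, rfl, rfl⟩
    simp

theorem getElem?_append_cons_eq_some_self_iff {u t : List α} {c : α} (hu : c ∉ u) (ht : c ∉ t)
    {i : ℕ} : (u ++ c :: t)[i]? = some c ↔ i = u.length := by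
  rcases lt_trichotomy i u.length with hi | rfl | hi
  · rw [getElem?_append_left hi]
    exact iff_of_false (fun h ↦ hu (mem_of_getElem? h)) hi.ne
  · simp
  · rw [getElem?_append_right hi.le]
    obtain ⟨k, rfl⟩ := Nat.exists_eq_add_of_lt hi
    simp only [show u.length + k + 1 - u.length = k + 1 by omega, getElem?_cons_succ]
    exact iff_of_false (fun h ↦ ht (mem_of_getElem? h)) (by omega)

theorem count_eq_one_iff_exists_append_cons [DecidableEq α] {a : α} {l : List α} :
    l.count a = 1 ↔ ∃ u t, l = u ++ a :: t ∧ a ∉ u ∧ a ∉ t := by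
  constructor
  · intro h
    obtain ⟨u, t, rfl⟩ := append_of_mem (count_pos_iff.1 (by omega : 0 < l.count a))
    simp only [count_append, count_cons_self] at h
    exact ⟨u, t, rfl, count_eq_zero.1 (by omega), count_eq_zero.1 (by omega)⟩
  · rintro ⟨u, t, rfl, hu, ht⟩
    simp [count_eq_zero.2 hu, count_eq_zero.2 ht]

end List

namespace NFA

variable {α σ σ' : Type*}

theorem mem_acceptsFrom_iff_exists_singleton (M : NFA α σ) {S : Set σ} {x : List α} :
    x ∈ M.acceptsFrom S ↔ ∃ q ∈ S, x ∈ M.acceptsFrom {q} := by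
  simp only [mem_acceptsFrom, mem_evalFrom_iff_exists (S := S)]
  grind

theorem cons_mem_acceptsFrom_singleton (M : NFA α σ) {q : σ} {a : α} {x : List α} :
    a :: x ∈ M.acceptsFrom {q} ↔ ∃ p ∈ M.step q a, x ∈ M.acceptsFrom {p} := by
  rw [cons_mem_acceptsFrom, stepSet_singleton, mem_acceptsFrom_iff_exists_singleton]

structure IsRightLanguages (M : NFA α σ) (L : σ → Language α) : Prop where
  nil_mem_iff (q : σ) : [] ∈ L q ↔ q ∈ M.accept
  cons_mem_iff (q : σ) (a : α) (x : List α) : a :: x ∈ L q ↔ ∃ p ∈ M.step q a, x ∈ L p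

theorem isRightLanguages_acceptsFrom (M : NFA α σ) :
    M.IsRightLanguages fun q ↦ M.acceptsFrom {q} where
  nil_mem_iff q := by simp
  cons_mem_iff _ _ _ := M.cons_mem_acceptsFrom_singleton

namespace IsRightLanguages

variable {M : NFA α σ} {L L' : σ → Language α}

theorem unique (h : M.IsRightLanguages L) (h' : M.IsRightLanguages L') : L = L' := by
  funext q
  ext x
  induction x generalizing q with
  | nil => rw [h.nil_mem_iff, h'.nil_mem_iff]
  | cons a x ih => simp only [h.cons_mem_iff, h'.cons_mem_iff, ih]

theorem acceptsFrom_singleton (h : M.IsRightLanguages L) (q : σ) : M.acceptsFrom {q} = L q :=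
  congrFun (M.isRightLanguages_acceptsFrom.unique h) q

theorem mem_accepts_iff (h : M.IsRightLanguages L) {x : List α} :
    x ∈ M.accepts ↔ ∃ q ∈ M.start, x ∈ L q := by
  simp only [accepts_eq_acceptsFrom_start, mem_acceptsFrom_iff_exists_singleton,
    h.acceptsFrom_singleton]

end IsRightLanguages

def sum (M₁ : NFA α σ) (M₂ : NFA α σ') : NFA α (σ ⊕ σ') where
  step := Sum.elim (fun q a ↦ Sum.inl '' M₁.step q a) (fun q a ↦ Sum.inr '' M₂.step q a)
  start := Sum.inl '' M₁.start ∪ Sum.inr '' M₂.start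
  accept := Sum.inl '' M₁.accept ∪ Sum.inr '' M₂.accept

theorem isRightLanguages_sum (M₁ : NFA α σ) (M₂ : NFA α σ') :
    (M₁.sum M₂).IsRightLanguages
      (Sum.elim (fun q ↦ M₁.acceptsFrom {q}) fun q ↦ M₂.acceptsFrom {q}) where
  nil_mem_iff q := by cases q <;> simp [sum]
  cons_mem_iff q a x := by
    cases q <;> simp only [Sum.elim_inl, Sum.elim_inr, cons_mem_acceptsFrom_singleton] <;>
      simp [sum]

theorem accepts_sum (M₁ : NFA α σ) (M₂ : NFA α σ') :
    (M₁.sum M₂).accepts = M₁.accepts + M₂.accepts := by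
  ext x
  rw [(isRightLanguages_sum M₁ M₂).mem_accepts_iff, Language.mem_add,
    M₁.isRightLanguages_acceptsFrom.mem_accepts_iff,
    M₂.isRightLanguages_acceptsFrom.mem_accepts_iff]
  simp [sum]

end NFA

section CountNeOne

variable {α : Type*} [DecidableEq α]

def countNeOneNFA (c : α) : NFA α (Fin 3) where
  step k a := {if a = c then ⟨min (k + 1) 2, by omega⟩ else k}
  start := {0}
  accept := {k | k ≠ 1}

theorem isRightLanguages_countNeOneNFA (c : α) :
    (countNeOneNFA c).IsRightLanguages fun k ↦ {w | min (k + w.count c) 2 ≠ 1} where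
  nil_mem_iff k := by
    simp [countNeOneNFA, Fin.ext_iff]
    omega
  cons_mem_iff k a x := by
    by_cases hac : a = c
    · simp [countNeOneNFA, hac]
      omega
    · simp [countNeOneNFA, hac]

theorem mem_countNeOneNFA_accepts {c : α} {w : List α} :
    w ∈ (countNeOneNFA c).accepts ↔ w.count c ≠ 1 := by
  rw [(isRightLanguages_countNeOneNFA c).mem_accepts_iff]
  simp [countNeOneNFA]
  omega

end CountNeOne

section GateLanguage

variable {n : ℕ} {u t w : List (Fin 3)}

def gateLanguage (n : ℕ) : Language (Fin 3) :=
  abStar * {[0]} * abLen n * {[2]} * abLen n * {[0]} * abStar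

theorem mem_abStar : w ∈ abStar ↔ 2 ∉ w :=
  ⟨fun h h2 ↦ h 2 h2 rfl, fun h _ hx hx2 ↦ h (hx2 ▸ hx)⟩

theorem mem_abLen : w ∈ abLen n ↔ w.length = n ∧ 2 ∉ w :=
  and_congr_right fun _ ↦ mem_abStar

theorem mem_abLen_mul_singleton_mul_abStar {a : Fin 3} (ha : a ≠ 2) :
    w ∈ abLen n * {[a]} * abStar ↔ 2 ∉ w ∧ w[n]? = some a := by
  rw [Language.mem_mul_singleton_mul_s11, List.getElem?_eq_some_iff_exists_append_cons]
  simp only [mem_abStar, mem_abLen]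
  constructor
  · rintro ⟨y, z, rfl, ⟨rfl, hy⟩, hz⟩
    exact ⟨by simp [hy, hz, ha.symm], y, z, rfl, rfl⟩
  · rintro ⟨h2, y, z, rfl, rfl⟩
    simp only [List.mem_append, List.mem_cons, not_or] at h2
    exact ⟨y, z, rfl, ⟨rfl, h2.1⟩, h2.2.2⟩

theorem mem_abStar_mul_singleton_mul_abLen {a : Fin 3} (ha : a ≠ 2) :
    w ∈ abStar * {[a]} * abLen n ↔ 2 ∉ w ∧ w.reverse[n]? = some a := by
  rw [Language.mem_mul_singleton_mul_s11, List.getElem?_eq_some_iff_exists_append_cons]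
  simp only [mem_abStar, mem_abLen]
  constructor
  · rintro ⟨u, t, rfl, hu, rfl, ht⟩
    exact ⟨by simp [hu, ht, ha.symm], t.reverse, u.reverse, by simp, by simp⟩
  · rintro ⟨h2, y, z, hw, rfl⟩
    rw [List.reverse_eq_iff, List.reverse_append, List.reverse_cons] at hw
    subst hw
    simp only [List.mem_append, List.mem_reverse, List.mem_cons, not_or] at h2
    exact ⟨z.reverse, y.reverse, by simp, by simpa using h2.1.1, by simp, by simpa using h2.2⟩

theorem mem_gateLanguage_iff : w ∈ gateLanguage n ↔ ∃ u t, w = u ++ 2 :: t ∧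
    2 ∉ u ∧ 2 ∉ t ∧ u.reverse[n]? = some 0 ∧ t[n]? = some 0 := by
  have hsplit : gateLanguage n =
      abStar * {[0]} * abLen n * {[2]} * (abLen n * {[0]} * abStar) := by
    simp only [gateLanguage, mul_assoc]
  rw [hsplit, Language.mem_mul_singleton_mul_s11]
  simp only [mem_abStar_mul_singleton_mul_abLen (by decide : (0 : Fin 3) ≠ 2),
    mem_abLen_mul_singleton_mul_abStar (by decide : (0 : Fin 3) ≠ 2)]
  grind

theorem count_eq_one_of_mem_gateLanguage (hw : w ∈ gateLanguage n) : w.count 2 = 1 := by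
  obtain ⟨u, t, rfl, hu, ht, -⟩ := mem_gateLanguage_iff.1 hw
  exact List.count_eq_one_iff_exists_append_cons.2 ⟨u, t, rfl, hu, ht⟩

theorem append_cons_mem_gateLanguage_iff (hu : 2 ∉ u) (ht : 2 ∉ t) :
    u ++ 2 :: t ∈ gateLanguage n ↔ u.reverse[n]? = some 0 ∧ t[n]? = some 0 := by
  rw [mem_gateLanguage_iff]
  constructor
  · rintro ⟨u', t', h, -, -, hgate⟩
    obtain ⟨rfl, -, rfl⟩ := (List.append_cons_inj_of_notMem hu ht).1 h
    exact hgate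
  · exact fun hgate ↦ ⟨u, t, rfl, hu, ht, hgate⟩

end GateLanguage

abbrev GateState (n : ℕ) := Bool ⊕ Fin (n + 1) ⊕ Fin (n + 1)

section GateNFA

local notation "scan" => Sum.inl false
local notation "sink" => Sum.inl true
local notation "beforeC " j:max => Sum.inr (Sum.inl j)
local notation "afterC " j:max => Sum.inr (Sum.inr j)

variable (n : ℕ)

def gateStep : GateState n → Fin 3 → Set (GateState n)
  | scan, a => if a = 1 then {scan, beforeC (Fin.last n)}
      else if a = 2 then {scan, afterC (Fin.last n)} else {scan}
  | sink, _ => {sink}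
  | beforeC ⟨0, _⟩, a => if a = 2 then {sink} else ∅
  | beforeC ⟨j + 1, _⟩, _ => {beforeC ⟨j, by omega⟩}
  | afterC ⟨0, _⟩, a => if a = 1 then {sink} else ∅
  | afterC ⟨j + 1, _⟩, _ => {afterC ⟨j, by omega⟩}

def gateNFA : NFA (Fin 3) (GateState n) where
  step := gateStep n
  start := insert scan (Set.range fun j ↦ beforeC j)
  accept := insert sink (Set.range fun j ↦ afterC j)

def gateRightLanguage : GateState n → Language (Fin 3)
  | scan => {w | ∃ i, w[i]? = some 1 ∧ w[i + n + 1]? = some 2 ∨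
      w[i]? = some 2 ∧ (w[i + n + 1]? = none ∨ w[i + n + 1]? = some 1)}
  | sink => {_w | True}
  | beforeC j => {w | w[(j : ℕ)]? = some 2}
  | afterC j => {w | w[(j : ℕ)]? = none ∨ w[(j : ℕ)]? = some 1}

theorem isRightLanguages_gateNFA : (gateNFA n).IsRightLanguages (gateRightLanguage n) where
  nil_mem_iff q := by
    rcases q with (_ | _) | _ | _ <;> simp [gateNFA, gateRightLanguage, -Set.ofPred_true]
  cons_mem_iff q a x := by
    rcases q with (_ | _) | ⟨_ | j, hj⟩ | ⟨_ | j, hj⟩ <;>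
      simp only [gateNFA, gateStep, gateRightLanguage, Language.mem_setOf]
    case inl.false =>
      rw [← Nat.or_exists_add_one]
      fin_cases a <;> simp [Nat.add_right_comm _ 1, or_comm]
    all_goals fin_cases a <;> simp [-Set.ofPred_true]

variable {n}

theorem mem_gateNFA_accepts_iff {w : List (Fin 3)} : w ∈ (gateNFA n).accepts ↔
    w ∈ gateRightLanguage n scan ∨ ∃ j : Fin (n + 1), w[(j : ℕ)]? = some 2 := by
  rw [(isRightLanguages_gateNFA n).mem_accepts_iff]
  simp [gateNFA, gateRightLanguage]

end GateNFA

theorem getElem?_ne_some_zero_iff_of_two_notMem {x : List (Fin 3)} (hx : 2 ∉ x) {n : ℕ} :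
    x[n]? ≠ some 0 ↔ x[n]? = none ∨ x[n]? = some 1 := by
  cases h : x[n]? with
  | none => simp
  | some v =>
    have hv : v ≠ 2 := fun hv ↦ hx (hv ▸ List.mem_of_getElem? h)
    fin_cases v <;> simp_all

theorem append_cons_mem_gateNFA_accepts_iff {n : ℕ} {u t : List (Fin 3)} (hu : 2 ∉ u)
    (ht : 2 ∉ t) : u ++ 2 :: t ∈ (gateNFA n).accepts ↔
      u.reverse[n]? ≠ some 0 ∨ t[n]? ≠ some 0 := by
  rw [mem_gateNFA_accepts_iff]
  simp only [gateRightLanguage, Language.mem_setOf,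
    List.getElem?_append_cons_eq_some_self_iff hu ht]
  have hafter : (u ++ 2 :: t)[u.length + n + 1]? = t[n]? := by
    rw [List.getElem?_append_right (by omega), show u.length + n + 1 - u.length = n + 1 by omega,
      List.getElem?_cons_succ]
  have hbefore : (∃ i, (u ++ 2 :: t)[i]? = some 1 ∧ i + n + 1 = u.length) ↔
      u.reverse[n]? = some 1 := by
    constructor
    · rintro ⟨i, h1, hi⟩
      rw [List.getElem?_append_left (by omega)] at h1
      rw [List.getElem?_reverse (l := u) (by omega), ← h1]
      congr 1
      omega
    · intro h
      have hn : n < u.length := by simpa using (List.getElem?_eq_some_iff.1 h).1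
      rw [List.getElem?_reverse hn] at h
      exact ⟨u.length - 1 - n, by rwa [List.getElem?_append_left (by omega)], by omega⟩
  have hshort : (∃ j : Fin (n + 1), (j : ℕ) = u.length) ↔ u.reverse[n]? = none := by
    rw [List.getElem?_eq_none_iff, List.length_reverse]
    exact ⟨fun ⟨j, hj⟩ ↦ by omega, fun h ↦ ⟨⟨u.length, by omega⟩, rfl⟩⟩
  simp only [exists_or, exists_eq_left, hafter, hbefore, hshort]
  rw [getElem?_ne_some_zero_iff_of_two_notMem (by simpa using hu),
    getElem?_ne_some_zero_iff_of_two_notMem ht]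
  tauto

/-- Section 4.2 of the paper: for every `n` there is an NFA over the
three-letter alphabet `{a, b, c}` (modeled by `Fin 3` with `a = 0`, `b = 1`,
`c = 2`) with at most `2n + 7` states accepting the complement
`{a, b, c}* ∖ ({a, b}* · {a} · {a, b}ⁿ · {c} · {a, b}ⁿ · {a} · {a, b}*)`. -/
theorem exists_small_nfa_complement_gate_family (n : ℕ) :
    ∃ (σ : Type) (inst : Fintype σ) (M : NFA (Fin 3) σ),
      @Fintype.card σ inst ≤ 2 * n + 7 ∧
      M.accepts = (abStar * {[0]} * abLen n * {[2]} * abLen n * {[0]} * abStar)ᶜ := by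
  refine ⟨Fin 3 ⊕ GateState n, inferInstance, (countNeOneNFA 2).sum (gateNFA n), ?_, ?_⟩
  · simp only [Fintype.card_sum, Fintype.card_fin, Fintype.card_bool]
    omega
  change _ = (gateLanguage n)ᶜ
  ext w
  change _ ↔ w ∉ gateLanguage n
  rw [NFA.accepts_sum, Language.mem_add, mem_countNeOneNFA_accepts]
  by_cases hw : w.count 2 = 1
  · obtain ⟨u, t, rfl, hu, ht⟩ := List.count_eq_one_iff_exists_append_cons.1 hw
    rw [append_cons_mem_gateNFA_accepts_iff hu ht, append_cons_mem_gateLanguage_iff hu ht]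
    tauto
  · exact iff_of_true (Or.inl hw) fun h ↦ hw (count_eq_one_of_mem_gateLanguage h)
end

section
/- Let Σ be a finite alphabet and Γ ⊆ Σ a set of gate symbols. For every c ∈ Γ let K_c be an index set and for every k ∈ K_c let U_{c,k} ⊆ (Σ ∖ Γ)* and V_{c,k} ⊆ Σ* be languages satisfying the disjointness condition: for all c ∈ Γ and k, k' ∈ K_c, if U_{c,k} ∩ U_{c,k'} ≠ ∅ then V_{c,k} = V_{c,k'}. Set L = ⋃_{c∈Γ} ⋃_{k∈K_c} U_{c,k} · {c} · V_{c,k}. Then Σ* ∖ L = (Σ ∖ Γ)* ∪ ⋃_{c∈Γ} ( ((Σ ∖ Γ)* ∖ ⋃_{k∈K_c} U_{c,k}) · {c} · Σ* ∪ ⋃_{k∈K_c} U_{c,k} · {c} · (Σ* ∖ V_{c,k}) ). -/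
/-- The language of words over `α` containing no occurrence of any symbol of
`Γ`, i.e. `(Σ ∖ Γ)*`. -/
def noGateSym {α : Type*} (Γ : Set α) : Language α := {w | ∀ x ∈ w, x ∉ Γ}

/-! A word outside `(Σ ∖ Γ)*` factors uniquely as `u c v` with `u` gate-free and `c ∈ Γ`: cut
it at its first gate. As every `U_{c',k}` is gate-free, such a word lies in
`U_{c',k} · {c'} · M` exactly when `c' = c`, `u ∈ U_{c,k}` and `v ∈ M`, so both sides reduce to
conditions on `(u, c, v)`. Disjointness makes all `V_{c,k}` with `u ∈ U_{c,k}` equal, so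
"`v ∉ V_{c,k}` for every such `k`" is the same as "`v ∉ V_{c,k}` for some such `k`, or there is
no such `k`". -/

namespace Language

variable {α : Type*}

@[simp] lemma mem_sup {l m : Language α} {x : List α} : x ∈ l ⊔ m ↔ x ∈ l ∨ x ∈ m := Iff.rfl

@[simp] lemma mem_compl {l : Language α} {x : List α} : x ∈ lᶜ ↔ x ∉ l := Iff.rfl

@[simp] lemma mem_sdiff {l m : Language α} {x : List α} : x ∈ l \ m ↔ x ∈ l ∧ x ∉ m := Iff.rfl

@[simp] lemma mem_top {x : List α} : x ∈ (⊤ : Language α) := trivial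

lemma mem_mul_singleton_mul_s16 {l m : Language α} {c : α} {x : List α} :
    x ∈ l * {[c]} * m ↔ ∃ u ∈ l, ∃ v ∈ m, x = u ++ c :: v := by
  simp only [mem_mul]
  constructor
  · rintro ⟨_, ⟨u, hu, _, rfl, rfl⟩, v, hv, rfl⟩
    exact ⟨u, hu, v, hv, by simp⟩
  · rintro ⟨u, hu, v, hv, rfl⟩
    exact ⟨u ++ [c], ⟨u, hu, [c], rfl, rfl⟩, v, hv, by simp⟩

end Language

section GateDecomposition

variable {α : Type*} {Γ : Set α}

lemma mem_noGateSym {w : List α} : w ∈ noGateSym Γ ↔ ∀ x ∈ w, x ∉ Γ := Iff.rfl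

lemma exists_eq_append_cons_of_notMem_noGateSym {w : List α} (hw : w ∉ noGateSym Γ) :
    ∃ u ∈ noGateSym Γ, ∃ c ∈ Γ, ∃ v, w = u ++ c :: v := by
  classical
  obtain ⟨c, hc⟩ : ∃ c, w.find? (· ∈ Γ) = some c := by
    rw [← Option.isSome_iff_exists, List.find?_isSome]
    simpa [mem_noGateSym] using hw
  obtain ⟨hcΓ, u, v, rfl, hu⟩ := List.find?_eq_some_iff_append.mp hc
  exact ⟨u, by simpa [mem_noGateSym] using hu, c, by simpa using hcΓ, v, rfl⟩

lemma append_cons_inj_of_mem_noGateSym {u u' v v' : List α} {c c' : α}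
    (hu : u ∈ noGateSym Γ) (hu' : u' ∈ noGateSym Γ) (hc : c ∈ Γ) (hc' : c' ∈ Γ)
    (h : u ++ c :: v = u' ++ c' :: v') : u = u' ∧ c = c' ∧ v = v' := by
  induction u generalizing u' with
  | nil =>
    cases u' with
    | nil => simpa using h
    | cons b u' =>
      obtain ⟨rfl, -⟩ := List.cons.inj h
      exact absurd hc (hu' c (by simp))
  | cons a u ih =>
    cases u' with
    | nil =>
      obtain ⟨rfl, -⟩ := List.cons.inj h
      exact absurd hc' (hu a (by simp))
    | cons b u' =>
      rw [List.cons_append, List.cons_append, List.cons.injEq] at h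
      obtain ⟨rfl, h⟩ := h
      obtain ⟨rfl, rfl, rfl⟩ := ih (List.forall_mem_of_forall_mem_cons hu)
        (List.forall_mem_of_forall_mem_cons hu') h
      exact ⟨rfl, rfl, rfl⟩

lemma append_cons_mem_mul_singleton_mul_iff {l m : Language α} {u v : List α} {c c' : α}
    (hl : l ≤ noGateSym Γ) (hu : u ∈ noGateSym Γ) (hc : c ∈ Γ) (hc' : c' ∈ Γ) :
    u ++ c' :: v ∈ l * {[c]} * m ↔ c = c' ∧ u ∈ l ∧ v ∈ m := by
  rw [Language.mem_mul_singleton_mul_s16]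
  constructor
  · rintro ⟨u', hu', v', hv', h⟩
    obtain ⟨rfl, rfl, rfl⟩ := append_cons_inj_of_mem_noGateSym (hl hu') hu hc hc' h.symm
    exact ⟨rfl, hu', hv'⟩
  · rintro ⟨rfl, hu, hv⟩
    exact ⟨u, hu, v, hv, rfl⟩

lemma notMem_mul_singleton_mul_of_mem_noGateSym {l m : Language α} {w : List α} {c : α}
    (hw : w ∈ noGateSym Γ) (hc : c ∈ Γ) : w ∉ l * {[c]} * m := by
  rw [Language.mem_mul_singleton_mul_s16]
  rintro ⟨u, -, v, -, rfl⟩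
  exact hw c (by simp) hc

lemma forall_mem_imp_notMem_iff {ι : Type*} {U V : ι → Language α}
    (hV : ∀ i j, U i ⊓ U j ≠ ⊥ → V i = V j) {u v : List α} :
    (∀ i, u ∈ U i → v ∉ V i) ↔ (∀ i, u ∉ U i) ∨ ∃ i, u ∈ U i ∧ v ∉ V i := by
  constructor
  · intro h
    by_cases hu : ∃ i, u ∈ U i
    · obtain ⟨i, hi⟩ := hu
      exact .inr ⟨i, hi, h i hi⟩
    · exact .inl (not_exists.mp hu)
  · rintro (h | ⟨i, hi, hv⟩) j hj
    · exact absurd hj (h j)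
    · rwa [hV j i (Set.Nonempty.ne_empty ⟨u, hj, hi⟩)]

end GateDecomposition

theorem gate_disjoint_language_identity_general {α : Type*} (Γ : Set α)
    (K : α → Type*) (U V : ∀ c : α, K c → Language α)
    (hU : ∀ c ∈ Γ, ∀ k, U c k ≤ noGateSym Γ)
    (hdisj : ∀ c ∈ Γ, ∀ k k' : K c, (U c k ⊓ U c k' ≠ ⊥) → V c k = V c k') :
    (⨆ c ∈ Γ, ⨆ k : K c, U c k * {[c]} * V c k)ᶜ =
      noGateSym Γ ⊔
        ⨆ c ∈ Γ, ((noGateSym Γ \ ⨆ k : K c, U c k) * {[c]} * ⊤ ⊔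
          ⨆ k : K c, U c k * {[c]} * (V c k)ᶜ) := by
  ext w
  by_cases hw : w ∈ noGateSym Γ
  · simp +contextual [hw, Language.mem_iSup, notMem_mul_singleton_mul_of_mem_noGateSym hw]
  obtain ⟨u, hu, c, hc, v, rfl⟩ := exists_eq_append_cons_of_notMem_noGateSym hw
  have hgate : ∀ c' ∈ Γ, ∀ {l m : Language α}, l ≤ noGateSym Γ →
      (u ++ c :: v ∈ l * {[c']} * m ↔ c' = c ∧ u ∈ l ∧ v ∈ m) :=
    fun c' hc' _ _ hl => append_cons_mem_mul_singleton_mul_iff hl hu hc' hc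
  simpa +contextual [Language.mem_iSup, hgate, hU, hc, hw, hu, ← and_or_left] using
    forall_mem_imp_notMem_iff (hdisj c hc)

/-- Language-level correctness of generalized gate complementation for
disjoint gate NFAs (Theorem `gate-disjoint`): `K c` indexes the `c`-gates,
`U c k` is the front language of the `k`-th `c`-gate and `V c k` the rear
language from its target; under the disjointness condition the complement of
`⋃_{c∈Γ} ⋃_{k∈K_c} U_{c,k} · {c} · V_{c,k}` has the stated shape. -/
theorem gate_disjoint_language_identity {α : Type*} [Fintype α] (Γ : Set α)
    (K : α → Type*) (U V : ∀ c : α, K c → Language α)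
    (hU : ∀ c ∈ Γ, ∀ k, U c k ≤ noGateSym Γ)
    (hdisj : ∀ c ∈ Γ, ∀ k k' : K c, (U c k ⊓ U c k' ≠ ⊥) → V c k = V c k') :
    (⨆ c ∈ Γ, ⨆ k : K c, U c k * {[c]} * V c k)ᶜ =
      noGateSym Γ ⊔
        ⨆ c ∈ Γ, ((noGateSym Γ \ ⨆ k : K c, U c k) * {[c]} * ⊤ ⊔
          ⨆ k : K c, U c k * {[c]} * (V c k)ᶜ) :=
  gate_disjoint_language_identity_general Γ K U V hU hdisj
end
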